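/- There is an absolute constant C > 0 such that for every 0 < θ < 1 and every odd prime p the following holds: let V ⊆ ℤ/pℤ be the union of the two intervals of residues I₀ = {0, 1, ..., ⌊θp/2⌋} and I₁ = {⌈p/2⌉, ⌈p/2⌉+1, ..., ⌈p/2⌉+⌊θp/2⌋} (taken modulo p). Then the number of 3APs (trivial and nontrivial) lying in V is at least θ²p²/2 − C·p. -/

import Mathlib

/-- The number of three-term arithmetic progressions in `S ⊆ ℤ/pℤ`, i.e. the number of
ordered pairs `(n, m)` of residues with `n, n + m, n + 2m ∈ S` (trivial and nontrivial).
Such pairs are counted via the equivalent, bijective encoding `(n, m) ↦ (n, n + m)`,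
a pair `(x, y) ∈ S × S` with `n + 2m = 2y - x ∈ S`. -/
def threeAPCount {p : ℕ} (S : Finset (ZMod p)) : ℕ :=
  ((S ×ˢ S).filter fun q => 2 * q.2 - q.1 ∈ S).card

/-!
Write `A = {0, …, k - 1}` and `h = (p + 1)/2`, so that `2h = 1` in `ℤ/pℤ` and
`V ⊇ A ∪ (h + A)`, a disjoint union (`I₀` and `I₁` themselves may share `0`).
If `x, y ∈ A` and `d = 2y - x` satisfies `d - 1, d, d + 1 ∈ A`, then each of the four pairs
`(x + ah, y + bh)`, `a, b ∈ {0, 1}`, spans a 3AP of `A ∪ (h + A)`, because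
`2(y + bh) - (x + ah) = d + b - ah` and `-h = h - 1`. Roughly `k²/2` pairs `(x, y) ∈ A²` have
`1 ≤ 2y - x ≤ k - 2`, which gives about `2k² ≈ θ²p²/2` progressions.
-/

open Finset

variable {p : ℕ}

lemma threeAPCount_mono {S T : Finset (ZMod p)} (hST : S ⊆ T) :
    threeAPCount S ≤ threeAPCount T := by
  unfold threeAPCount
  refine card_le_card fun q hq => ?_
  simp only [mem_filter, mem_product] at hq ⊢
  exact ⟨⟨hST hq.1.1, hST hq.1.2⟩, hST hq.2⟩

def stableAPPairs (A : Finset (ZMod p)) : Finset (ZMod p × ZMod p) :=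
  (A ×ˢ A).filter fun q =>
    2 * q.2 - q.1 - 1 ∈ A ∧ 2 * q.2 - q.1 ∈ A ∧ 2 * q.2 - q.1 + 1 ∈ A

lemma four_mul_card_stableAPPairs_le_threeAPCount (A : Finset (ZMod p)) {h : ZMod p}
    (h2 : 2 * h = 1) (hdisj : Disjoint A (A.image (h + ·))) :
    4 * (stableAPPairs A).card ≤ threeAPCount (A ∪ A.image (h + ·)) := by
  let shift : Bool → ZMod p → ZMod p := fun a x => if a then h + x else x
  have shift_mem {a : Bool} {x : ZMod p} (hx : x ∈ A) : shift a x ∈ A ∪ A.image (h + ·) := by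
    cases a
    · exact mem_union_left _ hx
    · exact mem_union_right _ (mem_image_of_mem _ hx)
  have shift_inj {a a' : Bool} {x x' : ZMod p} (hx : x ∈ A) (hx' : x' ∈ A)
      (he : shift a x = shift a' x') : a = a' ∧ x = x' := by
    cases a <;> cases a' <;> simp only [shift, if_true, Bool.false_eq_true, if_false] at he
    · exact ⟨rfl, he⟩
    · exact (disjoint_left.1 hdisj hx (mem_image.2 ⟨x', hx', he.symm⟩)).elim
    · exact (disjoint_left.1 hdisj hx' (mem_image.2 ⟨x, hx, he⟩)).elim
    · exact ⟨rfl, add_left_cancel he⟩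
  let lift : (Bool × Bool) × (ZMod p × ZMod p) → ZMod p × ZMod p :=
    fun q => (shift q.1.1 q.2.1, shift q.1.2 q.2.2)
  have hcard :
      ((univ : Finset (Bool × Bool)) ×ˢ stableAPPairs A).card = 4 * (stableAPPairs A).card := by
    simp [card_product]
  rw [← hcard]
  refine card_le_card_of_injOn lift ?_ ?_
  · rintro ⟨⟨a, b⟩, ⟨x, y⟩⟩ hq
    simp only [stableAPPairs, mem_coe, mem_product, mem_filter, mem_univ, true_and] at hq
    obtain ⟨⟨hx, hy⟩, hdm, hd, hdp⟩ := hq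
    simp only [mem_coe, mem_filter, mem_product, lift]
    refine ⟨⟨shift_mem hx, shift_mem hy⟩, ?_⟩
    cases a <;> cases b <;> simp only [shift, if_true, Bool.false_eq_true, if_false]
    · exact mem_union_left _ hd
    · exact mem_union_left _ (by convert hdp using 1; linear_combination h2)
    · exact mem_union_right _ (mem_image.2 ⟨_, hdm, by linear_combination h2⟩)
    · exact mem_union_right _ (mem_image.2 ⟨_, hd, by ring⟩)
  · rintro ⟨⟨a, b⟩, ⟨x, y⟩⟩ hq ⟨⟨a', b'⟩, ⟨x', y'⟩⟩ hq' he
    simp only [stableAPPairs, mem_coe, mem_product, mem_filter, mem_univ, true_and] at hq hq'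
    simp only [lift, Prod.mk.injEq] at he
    obtain ⟨rfl, rfl⟩ := shift_inj hq.1.1 hq'.1.1 he.1
    obtain ⟨rfl, rfl⟩ := shift_inj hq.1.2 hq'.1.2 he.2
    rfl

lemma natCast_inj_of_lt {m n : ℕ} (hm : m < p) (hn : n < p) (h : (m : ZMod p) = n) : m = n := by
  rwa [ZMod.natCast_eq_natCast_iff', Nat.mod_eq_of_lt hm, Nat.mod_eq_of_lt hn] at h

lemma mul_half_le_card_stableAPPairs_range {m : ℕ} (hm : m ≤ p) :
    m * ((m - 2) / 2) ≤ (stableAPPairs ((range m).image (Nat.cast : ℕ → ZMod p))).card := by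
  set A := (range m).image (Nat.cast : ℕ → ZMod p)
  have mem_A {n : ℕ} (hn : n < m) : (n : ZMod p) ∈ A := mem_image_of_mem _ (mem_range.2 hn)
  -- For `x < m` and `j < (m - 2)/2`, `y = ⌊x/2⌋ + 1 + j` gives `1 ≤ 2y - x ≤ m - 2`.
  let pair : ℕ × ℕ → ZMod p × ZMod p := fun q => (q.1, ((q.1 / 2 + 1 + q.2 : ℕ) : ZMod p))
  have hcard : (range m ×ˢ range ((m - 2) / 2)).card = m * ((m - 2) / 2) := by
    simp [card_product]
  rw [← hcard]
  refine card_le_card_of_injOn pair ?_ ?_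
  · rintro ⟨x, j⟩ hq
    simp only [mem_coe, mem_product, mem_range] at hq
    obtain ⟨d, hd, hdm⟩ : ∃ d, 2 * (x / 2 + 1 + j) = x + 1 + d ∧ d + 2 < m :=
      ⟨2 * (x / 2 + 1 + j) - x - 1, by omega, by omega⟩
    have hdc := congrArg (Nat.cast (R := ZMod p)) hd
    push_cast at hdc
    simp only [stableAPPairs, mem_coe, mem_filter, mem_product, pair]
    refine ⟨⟨mem_A hq.1, mem_A (by omega)⟩, ?_, ?_, ?_⟩
    · convert mem_A (n := d) (by omega) using 1
      push_cast
      linear_combination hdc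
    · convert mem_A (n := d + 1) (by omega) using 1
      push_cast
      linear_combination hdc
    · convert mem_A (n := d + 2) (by omega) using 1
      push_cast
      linear_combination hdc
  · rintro ⟨x, j⟩ hq ⟨x', j'⟩ hq' he
    simp only [mem_coe, mem_product, mem_range] at hq hq'
    simp only [pair, Prod.mk.injEq] at he
    have hx := natCast_inj_of_lt (by omega) (by omega) he.1
    have hy := natCast_inj_of_lt (by omega) (by omega) he.2
    simp only [Prod.mk.injEq]
    omega

lemma disjoint_range_image_add_natCast {k h : ℕ} (hk : k ≤ h) (hhk : h + k ≤ p) :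
    Disjoint ((range k).image (Nat.cast : ℕ → ZMod p))
      (((range k).image (Nat.cast : ℕ → ZMod p)).image ((h : ZMod p) + ·)) := by
  rw [image_image, disjoint_left]
  simp only [mem_image, mem_range, Function.comp_apply, not_exists, not_and]
  rintro _ ⟨i, hi, rfl⟩ j hj he
  have he' : ((h + j : ℕ) : ZMod p) = i := by push_cast; exact he
  have := natCast_inj_of_lt (by omega) (by omega) he'
  omega

lemma two_mul_natCast_half_succ (hp : Odd p) : 2 * (((p + 1) / 2 : ℕ) : ZMod p) = 1 := by
  have h := congrArg (Nat.cast (R := ZMod p)) (Nat.two_mul_div_two_of_even (n := p + 1) hp.add_one)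
  push_cast [ZMod.natCast_self, zero_add] at h
  exact h

lemma natCeil_div_two_of_odd (hp : Odd p) : ⌈(p : ℝ) / 2⌉₊ = (p + 1) / 2 := by
  obtain ⟨t, rfl⟩ := hp
  rw [show (2 * t + 1 + 1) / 2 = t + 1 by omega, Nat.ceil_eq_iff (by omega)]
  push_cast [Nat.add_sub_cancel]
  constructor <;> linarith

lemma four_mul_half_le_threeAPCount_twoIntervals {k : ℕ} (hp : Odd p) (hk : 2 * k < p) :
    4 * (k * ((k - 2) / 2)) ≤
      threeAPCount (((range (k + 1)).image fun j : ℕ => (j : ZMod p)) ∪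
        ((range (k + 1)).image fun j : ℕ => (((p + 1) / 2 + j : ℕ) : ZMod p))) := by
  set A := (range k).image (Nat.cast : ℕ → ZMod p)
  set h : ZMod p := (((p + 1) / 2 : ℕ) : ZMod p)
  have hsub : A ∪ A.image (h + ·) ⊆ ((range (k + 1)).image fun j : ℕ => (j : ZMod p)) ∪
      ((range (k + 1)).image fun j : ℕ => (((p + 1) / 2 + j : ℕ) : ZMod p)) := by
    rw [image_image]
    refine union_subset_union (image_subset_image (range_subset_range.2 k.le_succ)) ?_
    intro z hz
    obtain ⟨j, hj, rfl⟩ := mem_image.1 hz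
    exact mem_image.2 ⟨j, range_subset_range.2 k.le_succ hj, by simp [h]⟩
  calc 4 * (k * ((k - 2) / 2))
      ≤ 4 * (stableAPPairs A).card :=
        Nat.mul_le_mul_left 4 (mul_half_le_card_stableAPPairs_range (by omega))
    _ ≤ threeAPCount (A ∪ A.image (h + ·)) :=
        four_mul_card_stableAPPairs_le_threeAPCount A (two_mul_natCast_half_succ hp)
          (disjoint_range_image_add_natCast (by omega) (by omega))
    _ ≤ _ := threeAPCount_mono hsub

/-- There is an absolute constant `C > 0` such that for every `0 < θ < 1` and odd prime
`p`: if `V ⊆ ℤ/pℤ` is the union of the intervals of residues `I₀ = {0, ..., ⌊θp/2⌋}` and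
`I₁ = {⌈p/2⌉, ..., ⌈p/2⌉ + ⌊θp/2⌋}`, then `V` contains at least `θ²p²/2 - Cp` 3APs
(trivial and nontrivial). -/
theorem union_of_two_intervals_has_many_aps :
    ∃ C : ℝ, 0 < C ∧ ∀ θ : ℝ, 0 < θ → θ < 1 → ∀ p : ℕ, p.Prime → Odd p →
      θ ^ 2 * (p : ℝ) ^ 2 / 2 - C * p ≤
        (threeAPCount
          (((Finset.range (⌊θ * p / 2⌋₊ + 1)).image fun j : ℕ => (j : ZMod p)) ∪
            ((Finset.range (⌊θ * p / 2⌋₊ + 1)).image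
              fun j : ℕ => ((⌈(p : ℝ) / 2⌉₊ + j : ℕ) : ZMod p))) : ℝ) := by
  refine ⟨6, by norm_num, fun θ hθ0 hθ1 p _ hp => ?_⟩
  rw [natCeil_div_two_of_odd hp]
  set k := ⌊θ * p / 2⌋₊
  have hk_le : (k : ℝ) ≤ θ * p / 2 := Nat.floor_le (by positivity)
  have hk_gt : θ * p / 2 < k + 1 := Nat.lt_floor_add_one _
  have hkp : 2 * k < p := by
    have : (2 * k : ℝ) < p := by nlinarith [(Nat.cast_pos.2 hp.pos : (0 : ℝ) < p)]
    exact_mod_cast this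
  have hcount : ((4 * (k * ((k - 2) / 2)) : ℕ) : ℝ) ≤ _ :=
    Nat.cast_le.2 (four_mul_half_le_threeAPCount_twoIntervals hp hkp)
  have hhalf : (k : ℝ) - 3 ≤ 2 * ((k - 2) / 2 : ℕ) := by
    have : k ≤ 2 * ((k - 2) / 2) + 3 := by omega
    have : (k : ℝ) ≤ 2 * ((k - 2) / 2 : ℕ) + 3 := by exact_mod_cast this
    linarith
  -- `θ²p²/2 < 2(k + 1)²` and `4k⌊(k - 2)/2⌋ ≥ 2k(k - 3)` differ by `10k + 2 ≤ 6p`.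
  push_cast at hcount hhalf ⊢
  nlinarith [mul_le_mul_of_nonneg_left hhalf (Nat.cast_nonneg (α := ℝ) (2 * k))]
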